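/- Let F : ℝ^n × ℝ^m → ℝ^n and G : ℝ^n × ℝ^m → ℝ^m be continuously differentiable, let (U*, M*) satisfy F(U*, M*) = 0 and G(U*, M*) = 0, and assume F_u = ∂F/∂U(U*,M*) and G_m = ∂G/∂M(U*,M*) are invertible. Set ρ := ρ(G_m^{-1} G_u F_u^{-1} F_m), where G_u = ∂G/∂U(U*,M*) and F_m = ∂F/∂M(U*,M*), and assume ρ < 1. Then for every real α with 0 < α < 2/(1 + ρ), the relaxed alternating sweeping iteration converges locally: there exist neighborhoods 𝒰 of U*, ℳ of M* such that every collection of sequences (U_k)_{k≥1} ⊆ 𝒰, (M̃_k)_{k≥1} ⊆ ℳ, (M_k)_{k≥0} ⊆ ℳ satisfying F(U_k, M_{k-1}) = 0, G(U_k, M̃_k) = 0, and M_k = α M̃_k + (1 − α) M_{k-1} for all k ≥ 1 has M_k → M* and U_k → U*. -/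

import Mathlib

/-
Near the solution, the implicit function theorem turns the two half-steps into maps
`U = φ(M)` (solving `F = 0`) and `M̃ = ψ(U)` (solving `G = 0`), so the sweep is the fixed-point
iteration of `T(M) = α ψ(φ(M)) + (1 - α) M`. Its derivative at `M*` is
`B = α A + (1 - α) I` with `A = G_m⁻¹ G_u F_u⁻¹ F_m`, whose eigenvalues `α λ + 1 - α` have modulus
at most `α ρ + |1 - α| < 1`. By Gelfand's formula some power `B^K` has operator norm `< 1`, so
`T^[K]` is a contraction on a ball around `M*`, and any orbit staying in that ball converges.
-/

open Filter Topology Matrix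

noncomputable def specRad {n : ℕ} (A : Matrix (Fin n) (Fin n) ℝ) : ℝ :=
  sSup ((fun z => ‖z‖) '' spectrum ℂ (A.map (algebraMap ℝ ℂ)))

theorem tendsto_of_dist_add_le_mul {X : Type*} [PseudoMetricSpace X] {x : ℕ → X} {a : X}
    {K : ℕ} (hK : 0 < K) {c δ : ℝ} (hc0 : 0 ≤ c) (hc1 : c < 1)
    (hδ : ∀ k, dist (x k) a ≤ δ) (hx : ∀ k, dist (x (k + K)) a ≤ c * dist (x k) a) :
    Tendsto x atTop (𝓝 a) := by
  have hbound : ∀ k, dist (x k) a ≤ c ^ (k / K) * δ := by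
    intro k
    induction k using Nat.strong_induction_on with
    | _ k ih =>
      rcases lt_or_ge k K with hk | hk
      · simpa [Nat.div_eq_of_lt hk] using hδ k
      · obtain ⟨j, rfl⟩ := Nat.exists_eq_add_of_le' hk
        calc dist (x (j + K)) a ≤ c * dist (x j) a := hx j
          _ ≤ c * (c ^ (j / K) * δ) := mul_le_mul_of_nonneg_left (ih j (by omega)) hc0
          _ = c ^ ((j + K) / K) * δ := by rw [Nat.add_div_right j hK, pow_succ]; ring
  have hlim : Tendsto (fun k => c ^ (k / K) * δ) atTop (𝓝 0) := by
    simpa using ((tendsto_pow_atTop_nhds_zero_of_lt_one hc0 hc1).comp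
      (Nat.tendsto_div_const_atTop hK.ne')).mul_const δ
  exact tendsto_iff_dist_tendsto_zero.2 (squeeze_zero (fun _ => dist_nonneg) hbound hlim)

theorem add_eq_iterate_of_succ_eq {X : Type*} {T : X → X} {x : ℕ → X}
    (hx : ∀ k, x (k + 1) = T (x k)) (k j : ℕ) : x (k + j) = T^[j] (x k) := by
  induction j with
  | zero => rfl
  | succ j ih => rw [← add_assoc, hx, ih, Function.iterate_succ_apply']

theorem HasStrictFDerivAt.exists_mem_nhds_tendsto_of_norm_pow_lt_one
    {𝕜 E : Type*} [NontriviallyNormedField 𝕜] [NormedAddCommGroup E] [NormedSpace 𝕜 E]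
    {T : E → E} {L : E →L[𝕜] E} {a : E}
    (hT : HasStrictFDerivAt T L a) (ha : T a = a) {K : ℕ} (hK : 0 < K) (hL : ‖L ^ K‖ < 1) :
    ∃ V ∈ 𝓝 a, ∀ x : ℕ → E, (∀ k, x k ∈ V) → (∀ k, x (k + 1) = T (x k)) →
      Tendsto x atTop (𝓝 a) := by
  obtain ⟨c, hLc, hc1⟩ := exists_between (show ‖L ^ K‖₊ < 1 from hL)
  obtain ⟨s, hs, hlip⟩ := (hT.iterate ha K).exists_lipschitzOnWith_of_nnnorm_lt c hLc
  obtain ⟨δ, hδ, hball⟩ := Metric.mem_nhds_iff.1 hs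
  refine ⟨Metric.ball a δ, Metric.ball_mem_nhds a hδ, fun x hxV hx => ?_⟩
  refine tendsto_of_dist_add_le_mul hK c.2 hc1 (fun k => (hxV k).le) fun k => ?_
  have := hlip.dist_le_mul (x k) (hball (hxV k)) a (mem_of_mem_nhds hs)
  rwa [← add_eq_iterate_of_succ_eq hx, Function.iterate_fixed ha] at this

section ImplicitFunction

variable {𝕜 E₁ E₂ F : Type*} [NontriviallyNormedField 𝕜]
  [NormedAddCommGroup E₁] [NormedSpace 𝕜 E₁] [CompleteSpace E₁]
  [NormedAddCommGroup E₂] [NormedSpace 𝕜 E₂] [CompleteSpace E₂]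
  [NormedAddCommGroup F] [NormedSpace 𝕜 F] [CompleteSpace F]
  {f : E₁ × E₂ → F} {f' : E₁ × E₂ →L[𝕜] F} {u : E₁ × E₂}

theorem HasStrictFDerivAt.exists_implicitFunction_snd (hf : HasStrictFDerivAt f f' u)
    (hf₂ : (f' ∘L .inr 𝕜 E₁ E₂).IsInvertible) :
    ∃ ψ : E₁ → E₂, ψ u.1 = u.2 ∧
      HasStrictFDerivAt ψ (-(f' ∘L .inr 𝕜 E₁ E₂).inverse ∘L (f' ∘L .inl 𝕜 E₁ E₂)) u.1 ∧
      ∀ᶠ v in 𝓝 u, f v = f u → ψ v.1 = v.2 :=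
  ⟨hf.implicitFunctionOfProdDomain hf₂,
    eq_of_tendsto_nhds (hf.tendsto_implicitFunctionOfProdDomain hf₂),
    hf.hasStrictFDerivAt_implicitFunctionOfProdDomain hf₂,
    (hf.eventually_apply_eq_iff_implicitFunctionOfProdDomain hf₂).mono fun _ h => h.1⟩

theorem HasStrictFDerivAt.exists_implicitFunction_fst (hf : HasStrictFDerivAt f f' u)
    (hf₁ : (f' ∘L .inl 𝕜 E₁ E₂).IsInvertible) :
    ∃ φ : E₂ → E₁, φ u.2 = u.1 ∧
      HasStrictFDerivAt φ (-(f' ∘L .inl 𝕜 E₁ E₂).inverse ∘L (f' ∘L .inr 𝕜 E₁ E₂)) u.2 ∧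
      ∀ᶠ v in 𝓝 u, f v = f u → φ v.2 = v.1 := by
  set e := (ContinuousLinearEquiv.prodComm 𝕜 E₂ E₁ : E₂ × E₁ →L[𝕜] E₁ × E₂)
  have hswap : HasStrictFDerivAt (f ∘ Prod.swap) (f' ∘L e) u.swap :=
    hf.comp u.swap (ContinuousLinearEquiv.prodComm 𝕜 E₂ E₁).hasStrictFDerivAt
  have hinl : (f' ∘L e) ∘L .inr 𝕜 E₂ E₁ = f' ∘L .inl 𝕜 E₁ E₂ := by ext; simp [e]
  have hinr : (f' ∘L e) ∘L .inl 𝕜 E₂ E₁ = f' ∘L .inr 𝕜 E₁ E₂ := by ext; simp [e]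
  obtain ⟨φ, hφu, hφ, hφf⟩ := hswap.exists_implicitFunction_snd (by rwa [hinl])
  refine ⟨φ, hφu, by simpa [hinl, hinr] using hφ, ?_⟩
  simpa using (continuous_swap.tendsto u).eventually hφf

end ImplicitFunction

theorem relaxedSweep_local_convergence_of_norm_pow_lt_one
    {𝕜 E₁ E₂ F₁ F₂ : Type*} [NontriviallyNormedField 𝕜]
    [NormedAddCommGroup E₁] [NormedSpace 𝕜 E₁] [CompleteSpace E₁]
    [NormedAddCommGroup E₂] [NormedSpace 𝕜 E₂] [CompleteSpace E₂]
    [NormedAddCommGroup F₁] [NormedSpace 𝕜 F₁] [CompleteSpace F₁]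
    [NormedAddCommGroup F₂] [NormedSpace 𝕜 F₂] [CompleteSpace F₂]
    {F : E₁ × E₂ → F₁} {G : E₁ × E₂ → F₂} {F' : E₁ × E₂ →L[𝕜] F₁} {G' : E₁ × E₂ →L[𝕜] F₂}
    {u : E₁} {m : E₂} (hF : HasStrictFDerivAt F F' (u, m)) (hG : HasStrictFDerivAt G G' (u, m))
    (hF0 : F (u, m) = 0) (hG0 : G (u, m) = 0)
    (hFu : (F' ∘L .inl 𝕜 E₁ E₂).IsInvertible) (hGm : (G' ∘L .inr 𝕜 E₁ E₂).IsInvertible)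
    {α : 𝕜} (hL : ∃ K, 0 < K ∧ ‖(α • ((G' ∘L .inr 𝕜 E₁ E₂).inverse ∘L (G' ∘L .inl 𝕜 E₁ E₂) ∘L
      (F' ∘L .inl 𝕜 E₁ E₂).inverse ∘L (F' ∘L .inr 𝕜 E₁ E₂)) + (1 - α) • .id 𝕜 E₂) ^ K‖ < 1) :
    ∃ 𝒰 ∈ 𝓝 u, ∃ ℳ ∈ 𝓝 m,
      ∀ (U : ℕ → E₁) (Mtilde : ℕ → E₂) (M : ℕ → E₂),
        (∀ k, 1 ≤ k → U k ∈ 𝒰) → (∀ k, 1 ≤ k → Mtilde k ∈ ℳ) → (∀ k, M k ∈ ℳ) →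
        (∀ k, 1 ≤ k →
          F (U k, M (k - 1)) = 0 ∧ G (U k, Mtilde k) = 0 ∧
          M k = α • Mtilde k + (1 - α) • M (k - 1)) →
        Tendsto M atTop (𝓝 m) ∧ Tendsto U atTop (𝓝 u) := by
  obtain ⟨K, hK, hLK⟩ := hL
  obtain ⟨φ, hφm, hφ, hφF⟩ := hF.exists_implicitFunction_fst hFu
  obtain ⟨ψ, hψu, hψ, hψG⟩ := hG.exists_implicitFunction_snd hGm
  rw [hF0] at hφF
  rw [hG0] at hψG
  dsimp only at hφm hψu
  set T : E₂ → E₂ := fun M => α • ψ (φ M) + (1 - α) • M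
  have hT : HasStrictFDerivAt T _ m :=
    (((hφm ▸ hψ).comp m hφ).const_smul α).add ((hasStrictFDerivAt_id m).const_smul (1 - α))
  have hTm : T m = m := by simp [T, hφm, hψu, ← add_smul]
  obtain ⟨V, hV, hconv⟩ := hT.exists_mem_nhds_tendsto_of_norm_pow_lt_one hTm hK
    (by simpa [ContinuousLinearMap.neg_comp, ContinuousLinearMap.comp_neg,
      ContinuousLinearMap.comp_assoc] using hLK)
  obtain ⟨𝒰, h𝒰, ℳ, hℳ, hsub⟩ := mem_nhds_prod_iff.1 (hφF.and hψG)
  refine ⟨𝒰, h𝒰, ℳ ∩ V, inter_mem hℳ hV, fun U Mt M hU hMt hM hsweep => ?_⟩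
  have hUφ : ∀ k, 1 ≤ k → U k = φ (M (k - 1)) := fun k hk =>
    ((hsub ⟨hU k hk, (hM (k - 1)).1⟩).1 (hsweep k hk).1).symm
  have hrec : ∀ k, M (k + 1) = T (M k) := fun k => by
    have hk := Nat.le_add_left 1 k
    obtain ⟨-, hGk, hMk⟩ := hsweep (k + 1) hk
    have hψk : ψ (U (k + 1)) = Mt (k + 1) := (hsub ⟨hU _ hk, (hMt _ hk).1⟩).2 hGk
    rw [hMk, ← hψk, hUφ _ hk, Nat.add_sub_cancel]
  have hMlim := hconv M (fun k => (hM k).2) hrec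
  refine ⟨hMlim, ?_⟩
  have hφlim : Tendsto (fun k => φ (M (k - 1))) atTop (𝓝 u) :=
    hφm ▸ hφ.continuousAt.tendsto.comp (hMlim.comp (tendsto_sub_atTop_nat 1))
  exact hφlim.congr' ((eventually_ge_atTop 1).mono fun k hk => (hUφ k hk).symm)

theorem norm_le_specRad {m : ℕ} (A : Matrix (Fin m) (Fin m) ℝ) {z : ℂ}
    (hz : z ∈ spectrum ℂ (A.map (algebraMap ℝ ℂ))) : ‖z‖ ≤ specRad A :=
  le_csSup ((Matrix.finite_spectrum _).image _).bddAbove ⟨z, hz, rfl⟩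

theorem specRad_nonneg {m : ℕ} (A : Matrix (Fin m) (Fin m) ℝ) : 0 ≤ specRad A :=
  Real.sSup_nonneg fun _ ⟨z, _, hz⟩ => hz ▸ norm_nonneg z

theorem spectralRadius_map_le_specRad {m : ℕ} (A : Matrix (Fin m) (Fin m) ℝ) :
    spectralRadius ℂ (A.map (algebraMap ℝ ℂ)) ≤ ENNReal.ofReal (specRad A) :=
  iSup₂_le fun z hz => by
    rw [← ENNReal.ofReal_coe_nnreal, coe_nnnorm]
    exact ENNReal.ofReal_le_ofReal (norm_le_specRad A hz)

theorem specRad_smul_add_smul_one_le {m : ℕ} (A : Matrix (Fin m) (Fin m) ℝ) {c : ℝ}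
    (hc : c ≠ 0) (d : ℝ) : specRad (c • A + d • 1) ≤ |c| * specRad A + |d| := by
  have hmap : (c • A + d • 1).map (algebraMap ℝ ℂ) = algebraMap ℂ _ (d : ℂ) +
      Units.mk0 (c : ℂ) (by exact_mod_cast hc) • A.map (algebraMap ℝ ℂ) := by
    ext i j
    by_cases hij : i = j <;> simp [hij, Matrix.algebraMap_matrix_apply]
    ring
  refine Real.sSup_le ?_ (add_nonneg (mul_nonneg (abs_nonneg c) (specRad_nonneg A)) (abs_nonneg d))
  rintro _ ⟨z, hz, rfl⟩
  rw [hmap, ← spectrum.singleton_add_eq, spectrum.unit_smul_eq_smul] at hz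
  obtain ⟨_, rfl, _, ⟨w, hw, rfl⟩, rfl⟩ := hz
  calc ‖(d : ℂ) + Units.mk0 (c : ℂ) _ • w‖ ≤ ‖(d : ℂ)‖ + ‖(c : ℂ)‖ * ‖w‖ := by
        simpa [Units.smul_def, norm_mul] using norm_add_le (d : ℂ) ((c : ℂ) * w)
    _ ≤ |c| * specRad A + |d| := by
        rw [Complex.norm_real, Complex.norm_real, Real.norm_eq_abs, Real.norm_eq_abs, add_comm]
        gcongr
        exact norm_le_specRad A hw

section MatrixCLM

variable {n : ℕ} {L : (Fin n → ℝ) →L[ℝ] (Fin n → ℝ)} {A : Matrix (Fin n) (Fin n) ℝ}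

theorem ContinuousLinearMap.isInvertible_of_apply_eq_mulVec (hL : ∀ x, L x = A *ᵥ x)
    (hA : IsUnit A) : L.IsInvertible ∧ ∀ y, L.inverse y = A⁻¹ *ᵥ y := by
  have hdet := (Matrix.isUnit_iff_isUnit_det A).1 hA
  let g : (Fin n → ℝ) →L[ℝ] (Fin n → ℝ) := LinearMap.toContinuousLinearMap A⁻¹.mulVecLin
  have hLg : L ∘L g = .id ℝ _ := by
    ext1 y; simp [g, hL, Matrix.mul_nonsing_inv A hdet]
  have hgL : g ∘L L = .id ℝ _ := by
    ext1 y; simp [g, hL, Matrix.nonsing_inv_mul A hdet]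
  exact ⟨.of_inverse hLg hgL, fun y => by rw [ContinuousLinearMap.inverse_eq hLg hgL]; rfl⟩

theorem ContinuousLinearMap.pow_apply_eq_pow_mulVec (hL : ∀ x, L x = A *ᵥ x) (K : ℕ)
    (x : Fin n → ℝ) : (L ^ K) x = (A ^ K) *ᵥ x := by
  induction K generalizing x with
  | zero => simp
  | succ K ih => rw [pow_succ, mul_apply_eq_comp, hL, ih, Matrix.mulVec_mulVec, pow_succ]

section LinftyOpNorm

attribute [local instance] Matrix.linftyOpNormedAddCommGroup Matrix.linftyOpNormedRing
  Matrix.linftyOpNormedAlgebra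

theorem Matrix.linfty_opNorm_map_ofReal {ι κ : Type*} [Fintype ι] [Fintype κ]
    (A : Matrix ι κ ℝ) :
    ‖A.map (algebraMap ℝ ℂ)‖ = ‖A‖ := by
  simp [Matrix.linfty_opNorm_def, Complex.nnnorm_real]

theorem exists_pow_linfty_opNorm_lt_one_of_specRad_lt_one (hA : specRad A < 1) :
    ∃ K, 0 < K ∧ ‖A ^ K‖ < 1 := by
  have : CompleteSpace (Matrix (Fin n) (Fin n) ℂ) := FiniteDimensional.complete ℂ _
  have hr := (spectralRadius_map_le_specRad A).trans_lt (ENNReal.ofReal_lt_one.2 hA)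
  obtain ⟨K, hK, hK0⟩ :=
    (((spectrum.pow_nnnorm_pow_one_div_tendsto_nhds_spectralRadius _).eventually_lt_const hr).and
      (eventually_gt_atTop 0)).exists
  rw [one_div, ENNReal.rpow_inv_lt_iff (by positivity), ENNReal.one_rpow, ENNReal.coe_lt_one_iff,
    ← Matrix.map_pow] at hK
  exact ⟨K, hK0, (Matrix.linfty_opNorm_map_ofReal _).symm.trans_lt hK⟩

theorem ContinuousLinearMap.exists_pow_norm_lt_one_of_specRad_lt_one (hL : ∀ x, L x = A *ᵥ x)
    (hA : specRad A < 1) : ∃ K, 0 < K ∧ ‖L ^ K‖ < 1 := by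
  obtain ⟨K, hK, hAK⟩ := exists_pow_linfty_opNorm_lt_one_of_specRad_lt_one hA
  refine ⟨K, hK, lt_of_le_of_lt ((L ^ K).opNorm_le_bound (norm_nonneg _) fun x => ?_) hAK⟩
  rw [pow_apply_eq_pow_mulVec hL]
  exact Matrix.linfty_opNorm_mulVec _ _

end LinftyOpNorm

end MatrixCLM

theorem mul_add_abs_one_sub_lt_one {α ρ : ℝ} (hρ0 : 0 ≤ ρ) (hρ1 : ρ < 1) (hα0 : 0 < α)
    (hα : α < 2 / (1 + ρ)) : α * ρ + |1 - α| < 1 := by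
  rw [lt_div_iff₀ (by linarith)] at hα
  rcases le_total α 1 with h | h
  · rw [abs_of_nonneg (by linarith)]; nlinarith
  · rw [abs_of_nonpos (by linarith)]; linarith

theorem relaxed_alternating_sweeping_local_convergence (n m : ℕ)
    (F : (Fin n → ℝ) × (Fin m → ℝ) → (Fin n → ℝ))
    (G : (Fin n → ℝ) × (Fin m → ℝ) → (Fin m → ℝ))
    (hF : ContDiff ℝ 1 F) (hG : ContDiff ℝ 1 G)
    (Ustar : Fin n → ℝ) (Mstar : Fin m → ℝ)
    (hFstar : F (Ustar, Mstar) = 0) (hGstar : G (Ustar, Mstar) = 0)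
    (Fu : Matrix (Fin n) (Fin n) ℝ) (Fm : Matrix (Fin n) (Fin m) ℝ)
    (Gu : Matrix (Fin m) (Fin n) ℝ) (Gm : Matrix (Fin m) (Fin m) ℝ)
    (hdF : ∀ (du : Fin n → ℝ) (dm : Fin m → ℝ),
      fderiv ℝ F (Ustar, Mstar) (du, dm) = Fu.mulVec du + Fm.mulVec dm)
    (hdG : ∀ (du : Fin n → ℝ) (dm : Fin m → ℝ),
      fderiv ℝ G (Ustar, Mstar) (du, dm) = Gu.mulVec du + Gm.mulVec dm)
    (hFu : IsUnit Fu) (hGm : IsUnit Gm)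
    (hρ : specRad (Gm⁻¹ * Gu * Fu⁻¹ * Fm) < 1)
    (α : ℝ) (hα0 : 0 < α) (hα1 : α < 2 / (1 + specRad (Gm⁻¹ * Gu * Fu⁻¹ * Fm))) :
    ∃ 𝒰 ∈ 𝓝 Ustar, ∃ ℳ ∈ 𝓝 Mstar,
      ∀ (U : ℕ → (Fin n → ℝ)) (Mtilde : ℕ → (Fin m → ℝ)) (M : ℕ → (Fin m → ℝ)),
        (∀ k, 1 ≤ k → U k ∈ 𝒰) → (∀ k, 1 ≤ k → Mtilde k ∈ ℳ) → (∀ k, M k ∈ ℳ) →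
        (∀ k, 1 ≤ k →
          F (U k, M (k - 1)) = 0 ∧ G (U k, Mtilde k) = 0 ∧
          M k = α • Mtilde k + (1 - α) • M (k - 1)) →
        Tendsto M atTop (𝓝 Mstar) ∧ Tendsto U atTop (𝓝 Ustar) := by
  set A := Gm⁻¹ * Gu * Fu⁻¹ * Fm
  obtain ⟨hFu_inv, hFu_inverse⟩ := ContinuousLinearMap.isInvertible_of_apply_eq_mulVec
    (L := fderiv ℝ F (Ustar, Mstar) ∘L .inl ℝ _ _) (fun x => by simp [hdF]) hFu
  obtain ⟨hGm_inv, hGm_inverse⟩ := ContinuousLinearMap.isInvertible_of_apply_eq_mulVec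
    (L := fderiv ℝ G (Ustar, Mstar) ∘L .inr ℝ _ _) (fun x => by simp [hdG]) hGm
  have hB : specRad (α • A + (1 - α) • 1) < 1 :=
    (specRad_smul_add_smul_one_le A hα0.ne' (1 - α)).trans_lt <| by
      simpa [abs_of_pos hα0] using mul_add_abs_one_sub_lt_one (specRad_nonneg A) hρ hα0 hα1
  refine relaxedSweep_local_convergence_of_norm_pow_lt_one
    (hF.contDiffAt.hasStrictFDerivAt one_ne_zero) (hG.contDiffAt.hasStrictFDerivAt one_ne_zero)
    hFstar hGstar hFu_inv hGm_inv
    (ContinuousLinearMap.exists_pow_norm_lt_one_of_specRad_lt_one (fun x => ?_) hB)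
  simp [A, hdF, hdG, hFu_inverse, hGm_inverse, Matrix.mulVec_mulVec, Matrix.add_mulVec,
    Matrix.smul_mulVec, Matrix.mul_assoc]
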